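/- Let g > 0 and let h : ℝ → ℂ satisfy lim_{s→+∞} s^g h(s) = 1, so the node filter decays like 1/s^g and its frequency-cutoff time constant τ satisfies τ^g = h(0). Assume ‖h(0)W‖ < 1 and Σ_{n=1}^∞ N^n |κ_n| |h(0)|^n < 1, and set G(s) := eᵀ(I − h(s)W)^{-1} e · h(s). Then the time constant τ_G of the network transfer function, defined by τ_G^g := G(0) / (lim_{s→+∞} s^g G(s)), satisfies τ_G^g = f(τ^g), where f(z) := z / (1 − Σ_{n=1}^∞ N^n κ_n z^n). (Theorem 2 of the paper: the network time constant is determined from the node time constant by the motif cumulant feedback function f.) -/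

import Mathlib

/-!
Write `φ(z) = eᵀ (1 - z W)⁻¹ e`, so that `G(s) = φ(h s) h s`. Since `s^g h(s) → 1` forces
`h s → 0` and `φ(0) = eᵀ e = 1`, the limit `L` equals `1`. At `z = h 0` the Neumann series gives
`φ(z) = ∑ aₙ` with `aₙ = eᵀ (z W)ⁿ e = (N z)ⁿ μₙ`, and the cumulant recursion
`μₘ₊₁ = ∑ₖ κₖ₊₁ μₘ₋ₖ` says that `aₘ₊₁` is the `m`-th Cauchy coefficient of `cₖ = (N z)ᵏ⁺¹ κₖ₊₁`
against `a`. Summing over `m` gives `φ(z) = 1 + (∑ c) φ(z)`, i.e. `(1 - ∑ c) φ(z) = 1`, hence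
`G(0) / L = z / (1 - ∑ c)`.
-/

open Matrix Filter Topology

theorem tendsto_zero_of_tendsto_rpow_mul {g : ℝ} (hg : 0 < g) {h : ℝ → ℂ} {c : ℂ}
    (hlim : Tendsto (fun s : ℝ => ((s ^ g : ℝ) : ℂ) * h s) atTop (𝓝 c)) :
    Tendsto h atTop (𝓝 0) := by
  have hinv : Tendsto (fun s : ℝ => ((s ^ g : ℝ) : ℂ)⁻¹) atTop (𝓝 0) := by
    simpa [Function.comp_def] using
      (Complex.continuous_ofReal.tendsto 0).comp (tendsto_rpow_atTop hg).inv_tendsto_atTop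
  have := hinv.mul hlim
  rw [zero_mul] at this
  refine this.congr' ?_
  filter_upwards [eventually_gt_atTop (0 : ℝ)] with s hs
  have hne : ((s ^ g : ℝ) : ℂ) ≠ 0 := Complex.ofReal_ne_zero.2 (Real.rpow_pos_of_pos hs g).ne'
  rw [inv_mul_cancel_left₀ hne]

theorem HasSum.dotProduct_mulVec {ι n R : Type*} [Fintype n] [CommRing R] [TopologicalSpace R]
    [IsTopologicalRing R]
    {f : ι → Matrix n n R} {A : Matrix n n R} (hf : HasSum f A) (u v : n → R) :
    HasSum (fun i => u ⬝ᵥ f i *ᵥ v) (u ⬝ᵥ A *ᵥ v) :=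
  hf.map (AddMonoidHom.mk' (fun M : Matrix n n R => u ⬝ᵥ M *ᵥ v)
    (fun M M' => by simp only [add_mulVec, dotProduct_add]))
    (continuous_const.dotProduct (continuous_id.matrix_mulVec continuous_const))

theorem Matrix.hasSum_pow_inv_one_sub {n 𝕜 : Type*} [Fintype n] [DecidableEq n] [RCLike 𝕜]
    {A : Matrix n n 𝕜}
    (hA : ‖toEuclideanCLM (𝕜 := 𝕜) A‖ < 1) : HasSum (fun k => A ^ k) (1 - A)⁻¹ := by
  -- The L2 operator norm induces the usual (entrywise) topology on matrices.
  let _ : NormedRing (Matrix n n 𝕜) := Matrix.instL2OpNormedRing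
  rw [nonsing_inv_eq_ringInverse]
  exact hasSum_geom_series_inverse A hA

theorem tendsto_dotProduct_inv_one_sub_smul_mulVec {α n R : Type*} [Fintype n] [DecidableEq n]
    [NormedCommRing R] [HasSummableGeomSeries R] {l : Filter α} {x : α → R}
    (hx : Tendsto x l (𝓝 0)) (W : Matrix n n R) (u v : n → R) :
    Tendsto (fun s => u ⬝ᵥ (1 - x s • W)⁻¹ *ᵥ v) l (𝓝 (u ⬝ᵥ v)) := by
  have h_one : Tendsto (fun s => 1 - x s • W) l (𝓝 1) := by
    simpa using tendsto_const_nhds.sub (hx.smul_const W)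
  have h_inv : ContinuousAt Inv.inv (1 : Matrix n n R) :=
    continuousAt_matrix_inv 1 (by simpa using NormedRing.inverse_continuousAt (1 : Rˣ))
  have h_form : Continuous fun M : Matrix n n R => u ⬝ᵥ M *ᵥ v :=
    continuous_const.dotProduct (continuous_id.matrix_mulVec continuous_const)
  have := h_form.continuousAt.tendsto.comp (h_inv.tendsto.comp h_one)
  rwa [inv_one, one_mulVec] at this

theorem one_sub_tsum_mul_tsum_of_recursion {R : Type*} [NormedRing R] [CompleteSpace R]
    {a c : ℕ → R} (ha : Summable fun n => ‖a n‖) (hc : Summable fun n => ‖c n‖)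
    (hrec : ∀ m, a (m + 1) = ∑ k ∈ Finset.range (m + 1), c k * a (m - k)) :
    (1 - ∑' n, c n) * ∑' n, a n = a 0 := by
  have hsum : ∑' n, a n = a 0 + (∑' n, c n) * ∑' n, a n := calc
    ∑' n, a n = a 0 + ∑' m, a (m + 1) := ha.of_norm.tsum_eq_zero_add
    _ = a 0 + (∑' n, c n) * ∑' n, a n := by
      rw [tsum_mul_tsum_eq_tsum_sum_range_of_summable_norm hc ha]
      simp only [hrec]
  rw [sub_mul, one_mul, sub_eq_iff_eq_add]
  exact hsum

theorem moment_succ_eq_sum_cumulant_mul {R : Type*} [Ring R] {μ κ : ℕ → R} (hμ0 : μ 0 = 1)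
    (hκ : ∀ n : ℕ, 1 ≤ n → κ n = μ n - ∑ k ∈ Finset.Ico 1 n, κ k * μ (n - k)) (m : ℕ) :
    μ (m + 1) = ∑ k ∈ Finset.range (m + 1), κ (k + 1) * μ (m - k) := by
  have h := hκ (m + 1) (Nat.le_add_left 1 m)
  rw [Finset.sum_Ico_eq_sum_range, Nat.add_sub_cancel] at h
  rw [Finset.sum_range_succ, Nat.sub_self, hμ0, mul_one, h]
  simp only [add_comm 1, Nat.add_sub_add_right]
  abel

theorem const_dotProduct_mulVec_const {n R : Type*} [Fintype n] [CommSemiring R]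
    (c : R) (M : Matrix n n R) :
    (fun _ => c) ⬝ᵥ M *ᵥ (fun _ => c) = c ^ 2 * ∑ i, ∑ j, M i j := by
  simp only [dotProduct, mulVec, Finset.mul_sum]
  refine Finset.sum_congr rfl fun i _ => Finset.sum_congr rfl fun j _ => ?_
  ring

theorem sum_sum_pow_eq_motif_moment {N : ℕ} (hN : 0 < N) (W : Matrix (Fin N) (Fin N) ℂ)
    {μ : ℕ → ℂ} (hμ0 : μ 0 = 1)
    (hμ : ∀ n : ℕ, 1 ≤ n →
      μ n = (1 / (N : ℂ) ^ (n + 1)) * ∑ i : Fin N, ∑ j : Fin N, (W ^ n) i j) (n : ℕ) :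
    ∑ i, ∑ j, (W ^ n) i j = (N : ℂ) ^ (n + 1) * μ n := by
  rcases Nat.eq_zero_or_pos n with rfl | hn
  · simp [hμ0, Matrix.one_apply]
  · have hN' : (N : ℂ) ≠ 0 := Nat.cast_ne_zero.2 hN.ne'
    rw [hμ n hn]
    field_simp

theorem one_sub_cumulant_tsum_mul_dotProduct_inv {n : Type*} [Fintype n] [DecidableEq n]
    {W : Matrix n n ℂ} {u v : n → ℂ} {w z : ℂ} {μ κ : ℕ → ℂ}
    (hmom : ∀ k, u ⬝ᵥ (W ^ k) *ᵥ v = w ^ k * μ k) (hμ0 : μ 0 = 1)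
    (hrec : ∀ m, μ (m + 1) = ∑ k ∈ Finset.range (m + 1), κ (k + 1) * μ (m - k))
    (hnorm : ‖toEuclideanCLM (𝕜 := ℂ) (z • W)‖ < 1)
    (hκ : Summable fun k => ‖w ^ (k + 1) * κ (k + 1) * z ^ (k + 1)‖) :
    (1 - ∑' k, w ^ (k + 1) * κ (k + 1) * z ^ (k + 1)) * (u ⬝ᵥ (1 - z • W)⁻¹ *ᵥ v) = 1 := by
  set a : ℕ → ℂ := fun k => u ⬝ᵥ ((z • W) ^ k) *ᵥ v
  have ha : HasSum a (u ⬝ᵥ (1 - z • W)⁻¹ *ᵥ v) :=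
    (hasSum_pow_inv_one_sub hnorm).dotProduct_mulVec u v
  have ha_eq : ∀ k, a k = (w * z) ^ k * μ k := fun k => by
    simp only [a, smul_pow, smul_mulVec, dotProduct_smul, hmom, smul_eq_mul]
    ring
  have ha_rec : ∀ m, a (m + 1) =
      ∑ k ∈ Finset.range (m + 1), w ^ (k + 1) * κ (k + 1) * z ^ (k + 1) * a (m - k) := by
    intro m
    rw [ha_eq, hrec, Finset.mul_sum]
    refine Finset.sum_congr rfl fun k hk => ?_
    obtain ⟨j, rfl⟩ := Nat.exists_eq_add_of_le (Finset.mem_range_succ_iff.1 hk)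
    rw [ha_eq, Nat.add_sub_cancel_left, add_right_comm, pow_add _ (k + 1), mul_pow, mul_pow]
    ring
  have ha_norm : Summable fun k => ‖a k‖ := summable_norm_iff.2 ha.summable
  have h_cauchy := one_sub_tsum_mul_tsum_of_recursion ha_norm hκ ha_rec
  rwa [ha.tsum_eq, ha_eq, pow_zero, one_mul, hμ0] at h_cauchy

theorem network_time_constant_motif_cumulants_general
    (N : ℕ) (hN : 0 < N) (W : Matrix (Fin N) (Fin N) ℂ)
    (e : Fin N → ℂ) (he : e = fun _ => ((Real.sqrt N : ℂ))⁻¹)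
    (μ κ : ℕ → ℂ)
    (hμ0 : μ 0 = 1)
    (hμ : ∀ n : ℕ, 1 ≤ n →
      μ n = (1 / (N : ℂ) ^ (n + 1)) * ∑ i : Fin N, ∑ j : Fin N, (W ^ n) i j)
    (hκ : ∀ n : ℕ, 1 ≤ n →
      κ n = μ n - ∑ k ∈ Finset.Ico 1 n, κ k * μ (n - k))
    (g : ℝ) (hg : 0 < g)
    (h : ℝ → ℂ)
    (hlim : Tendsto (fun s : ℝ => ((s ^ g : ℝ) : ℂ) * h s) atTop (nhds 1))
    (hnorm : ‖Matrix.toEuclideanCLM (𝕜 := ℂ) (h 0 • W)‖ < 1)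
    (S : ℝ)
    (hS : HasSum (fun n : ℕ =>
      (N : ℝ) ^ (n + 1) * ‖κ (n + 1)‖ * ‖h 0‖ ^ (n + 1)) S)
    (G : ℝ → ℂ)
    (hG : G = fun s : ℝ => e ⬝ᵥ (1 - h s • W)⁻¹.mulVec e * h s)
    (L : ℂ)
    (hL : Tendsto (fun s : ℝ => ((s ^ g : ℝ) : ℂ) * G s) atTop (nhds L)) :
    G 0 / L =
      h 0 / (1 - ∑' n : ℕ, (N : ℂ) ^ (n + 1) * κ (n + 1) * (h 0) ^ (n + 1)) := by
  subst hG
  beta_reduce at hL ⊢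
  have hmom : ∀ k, e ⬝ᵥ (W ^ k) *ᵥ e = (N : ℂ) ^ k * μ k := fun k => by
    have hN' : (N : ℂ) ≠ 0 := Nat.cast_ne_zero.2 hN.ne'
    have he_sq : ((Real.sqrt N : ℂ))⁻¹ ^ 2 = (N : ℂ)⁻¹ := by
      rw [inv_pow, ← Complex.ofReal_pow, Real.sq_sqrt (Nat.cast_nonneg N), Complex.ofReal_natCast]
    rw [he, const_dotProduct_mulVec_const, sum_sum_pow_eq_motif_moment hN W hμ0 hμ k, he_sq,
      pow_succ]
    field_simp
  have hee : e ⬝ᵥ e = 1 := by simpa [hμ0] using hmom 0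
  have hL1 : L = 1 := by
    have hφ := tendsto_dotProduct_inv_one_sub_smul_mulVec
      (tendsto_zero_of_tendsto_rpow_mul hg hlim) W e e
    rw [hee] at hφ
    refine tendsto_nhds_unique hL ?_
    simpa only [one_mul, mul_assoc, mul_comm (h _)] using hlim.mul hφ
  have hfeed := one_sub_cumulant_tsum_mul_dotProduct_inv hmom hμ0
    (moment_succ_eq_sum_cumulant_mul hμ0 hκ) hnorm
    (hS.summable.congr fun k => by simp only [norm_mul, norm_pow, Complex.norm_natCast])
  rw [hL1, div_one, div_eq_mul_inv, ← inv_eq_of_mul_eq_one_right hfeed, mul_comm]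

/-- **Theorem 2 of the paper.** Suppose the node filter decays like `1/s^g`
(`s^g h(s) → 1` as `s → +∞`), so its frequency-cutoff time constant `τ` satisfies
`τ^g = h(0)`.  Assume `‖h(0) • W‖ < 1` and `∑_{n≥1} N^n |κ_n| |h(0)|^n < 1`, and let
`G(s) = eᵀ (I - h(s)W)⁻¹ e ⬝ h(s)` be the network transfer function.  Then the network
time constant `τ_G`, defined by `τ_G^g = G(0) / lim_{s→∞} s^g G(s)`, satisfies
`τ_G^g = f(τ^g)` where `f(z) = z / (1 - ∑_{n≥1} N^n κ_n z^n)`. -/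
theorem network_time_constant_motif_cumulants
    (N : ℕ) (hN : 0 < N) (W : Matrix (Fin N) (Fin N) ℂ)
    (e : Fin N → ℂ) (he : e = fun _ => ((Real.sqrt N : ℂ))⁻¹)
    (μ κ : ℕ → ℂ)
    (hμ0 : μ 0 = 1)
    (hμ : ∀ n : ℕ, 1 ≤ n →
      μ n = (1 / (N : ℂ) ^ (n + 1)) * ∑ i : Fin N, ∑ j : Fin N, (W ^ n) i j)
    (hκ : ∀ n : ℕ, 1 ≤ n →
      κ n = μ n - ∑ k ∈ Finset.Ico 1 n, κ k * μ (n - k))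
    (g : ℝ) (hg : 0 < g)
    (h : ℝ → ℂ)
    (hlim : Tendsto (fun s : ℝ => ((s ^ g : ℝ) : ℂ) * h s) atTop (nhds 1))
    (hnorm : ‖Matrix.toEuclideanCLM (𝕜 := ℂ) (h 0 • W)‖ < 1)
    (S : ℝ)
    (hS : HasSum (fun n : ℕ =>
      (N : ℝ) ^ (n + 1) * ‖κ (n + 1)‖ * ‖h 0‖ ^ (n + 1)) S)
    (hS1 : S < 1)
    (G : ℝ → ℂ)
    (hG : G = fun s : ℝ => e ⬝ᵥ (1 - h s • W)⁻¹.mulVec e * h s)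
    (L : ℂ)
    (hL : Tendsto (fun s : ℝ => ((s ^ g : ℝ) : ℂ) * G s) atTop (nhds L)) :
    G 0 / L =
      h 0 / (1 - ∑' n : ℕ, (N : ℂ) ^ (n + 1) * κ (n + 1) * (h 0) ^ (n + 1)) :=
  network_time_constant_motif_cumulants_general N hN W e he μ κ hμ0 hμ hκ g hg h hlim hnorm S hS G
    hG L hL
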